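/- arXiv:2110.06377 — 3 statements merged into one kernel-verified Lean document; each statement's English description precedes it below -/
import Mathlib

section
/- Let r₁ < 0 < r₃ and r₂ be integers with gcd(r₁, r₂, r₃) = 1, and let v₂ ∈ ℕ. Define S = {α r₁ + β r₂ + γ r₃ : α, γ ∈ ℕ, β ∈ ℕ, β ≤ v₂}. Then S = ℤ if and only if either gcd(r₁, r₃) = 1, or (setting d' = gcd(r₁, r₃) > 1) r₂ ∉ d'ℤ and v₂ ≥ d' − 1. -/
/-!
Let `d = gcd(r₁, r₃)`. Since `r₁ < 0 < r₃`, the combinations `α r₁ + γ r₃` with `α, γ ≥ 0` are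
exactly the multiples of `d`, so `S = ℤ` iff the residues `β r₂` with `β ≤ v₂` cover `ℤ/dℤ`.
The gcd hypothesis makes `r₂` a unit modulo `d`, so this happens iff `d ≤ v₂ + 1`; and `d ∣ r₂`
only when `d = 1`.
-/

theorem Int.exists_nat_mul_add_nat_mul_eq_iff {a b m : ℤ} (ha : a < 0) (hb : 0 < b) :
    (∃ α γ : ℕ, m = α * a + γ * b) ↔ (Int.gcd a b : ℤ) ∣ m := by
  constructor
  · rintro ⟨α, γ, rfl⟩
    exact dvd_add ((Int.gcd_dvd_left a b).mul_left _) ((Int.gcd_dvd_right a b).mul_left _)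
  · rintro ⟨k, rfl⟩
    set x := k * Int.gcdA a b
    set y := k * Int.gcdB a b
    -- shifting `(x, y)` by `t • (b, -a)` keeps `x * a + y * b` and makes both coefficients nonnegative
    set t := |x| + |y|
    have ht : 0 ≤ t := by positivity
    have hx : 0 ≤ x + t * b := by
      nlinarith [neg_abs_le x, abs_nonneg y, mul_le_mul_of_nonneg_left (b := 1) hb ht]
    have hy : 0 ≤ y - t * a := by
      nlinarith [neg_abs_le y, abs_nonneg x, mul_le_mul_of_nonneg_left (b := 1) (neg_pos.2 ha) ht]
    refine ⟨(x + t * b).toNat, (y - t * a).toNat, ?_⟩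
    rw [Int.toNat_of_nonneg hx, Int.toNat_of_nonneg hy, Int.gcd_eq_gcd_ab]
    ring

theorem ZMod.forall_exists_natCast_mul_eq_iff {n : ℕ} [NeZero n] (u : (ZMod n)ˣ) (v : ℕ) :
    (∀ x : ZMod n, ∃ β ≤ v, (β : ZMod n) * u = x) ↔ n ≤ v + 1 := by
  constructor
  · intro h
    have hsurj : Function.Surjective fun β : Fin (v + 1) ↦ (β : ZMod n) * u := fun x ↦ by
      obtain ⟨β, hβ, rfl⟩ := h x
      exact ⟨⟨β, Nat.lt_succ_of_le hβ⟩, rfl⟩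
    simpa using Fintype.card_le_of_surjective _ hsurj
  · intro hn x
    refine ⟨(x * u⁻¹.val).val, by have := ZMod.val_lt (x * u⁻¹.val); omega, ?_⟩
    simp

theorem Int.isCoprime_gcd_of_gcd_gcd_eq_one {a b c : ℤ} (h : Int.gcd a (Int.gcd b c : ℤ) = 1) :
    IsCoprime (Int.gcd a c : ℤ) b := by
  rwa [Int.isCoprime_iff_gcd_eq_one, Int.gcd_right_comm, Int.gcd_assoc]

theorem setOf_nat_combination_eq_univ_iff {a b c : ℤ} (ha : a < 0) (hc : 0 < c)
    (hcop : IsCoprime (Int.gcd a c : ℤ) b) (v : ℕ) :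
    {z : ℤ | ∃ α β γ : ℕ, β ≤ v ∧ z = α * a + β * b + γ * c} = Set.univ ↔
      Int.gcd a c ≤ v + 1 := by
  set d := Int.gcd a c
  have : NeZero d := ⟨(Int.gcd_pos_of_ne_zero_left c ha.ne).ne'⟩
  have hmem (z : ℤ) : (∃ α β γ : ℕ, β ≤ v ∧ z = α * a + β * b + γ * c) ↔
      ∃ β ≤ v, (β : ZMod d) * (ZMod.unitOfIsCoprime b hcop.symm : ZMod d) = z := by
    have hcast (β : ℕ) : (β : ZMod d) * b = z ↔ ∃ α γ : ℕ, z - β * b = α * a + γ * c := by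
      rw [Int.exists_nat_mul_add_nat_mul_eq_iff ha hc, ← ZMod.intCast_eq_intCast_iff_dvd_sub]
      push_cast
      rfl
    simp only [ZMod.coe_unitOfIsCoprime, hcast, sub_eq_iff_eq_add]
    constructor
    · rintro ⟨α, β, γ, hβ, rfl⟩
      exact ⟨β, hβ, α, γ, by ring⟩
    · rintro ⟨β, hβ, α, γ, hz⟩
      exact ⟨α, β, γ, hβ, by rw [hz]; ring⟩
  rw [← ZMod.forall_exists_natCast_mul_eq_iff (ZMod.unitOfIsCoprime b hcop.symm),
    Set.eq_univ_iff_forall, ZMod.intCast_surjective.forall]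
  simp only [Set.mem_ofPred_eq, hmem]

theorem stmt_5 (r1 r2 r3 : ℤ) (h1 : r1 < 0) (h3 : 0 < r3)
    (hg : Int.gcd r1 (Int.gcd r2 r3 : ℤ) = 1) (v2 : ℕ) :
    {z : ℤ | ∃ α β γ : ℕ, β ≤ v2 ∧
        z = (α : ℤ) * r1 + (β : ℤ) * r2 + (γ : ℤ) * r3} = Set.univ ↔
      (Int.gcd r1 r3 = 1 ∨
        (¬ ((Int.gcd r1 r3 : ℤ) ∣ r2) ∧ v2 ≥ Int.gcd r1 r3 - 1)) := by
  have hcop := Int.isCoprime_gcd_of_gcd_gcd_eq_one hg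
  have hdvd : (Int.gcd r1 r3 : ℤ) ∣ r2 ↔ Int.gcd r1 r3 = 1 :=
    ⟨fun h ↦ Nat.isUnit_iff.1 (Int.ofNat_isUnit.1 (hcop.isUnit_of_dvd h)), fun h ↦ by simp [h]⟩
  have hpos := Int.gcd_pos_of_ne_zero_left r3 h1.ne
  rw [setOf_nat_combination_eq_univ_iff h1 h3 hcop, hdvd]
  omega
end

section
/- Let r₁ < 0 < r₃ be integers, d' = gcd(r₁, r₃), r₂ an integer with gcd(d', r₂) = 1 and d' > 1, and v₂ ∈ ℕ. If the set S = {α r₁ + β r₂ + γ r₃ : α, γ ∈ ℕ, 0 ≤ β ≤ v₂} equals ℤ, then v₂ ≥ d' − 1. -/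
theorem IsCoprime.dvd_add_one_of_neg_eq_linear_comb {R : Type*} [CommRing R]
    {d r₁ r₂ r₃ a b c : R} (h₁ : d ∣ r₁) (h₃ : d ∣ r₃) (hcop : IsCoprime d r₂)
    (h : -r₂ = a * r₁ + b * r₂ + c * r₃) : d ∣ b + 1 := by
  have hmul : (b + 1) * r₂ = -(a * r₁ + c * r₃) := by linear_combination -h
  refine hcop.dvd_of_dvd_mul_right ?_
  rw [hmul]
  exact ((h₁.mul_left a).add (h₃.mul_left c)).neg_right

theorem stmt_8_general (r1 r2 r3 : ℤ)
    (hc : Int.gcd (Int.gcd r1 r3 : ℤ) r2 = 1) (v2 : ℕ)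
    (hfull : {z : ℤ | ∃ α β γ : ℕ, β ≤ v2 ∧
        z = (α : ℤ) * r1 + (β : ℤ) * r2 + (γ : ℤ) * r3} = Set.univ) :
    v2 ≥ Int.gcd r1 r3 - 1 := by
  have hmem : -r2 ∈ {z : ℤ | ∃ α β γ : ℕ, β ≤ v2 ∧
      z = (α : ℤ) * r1 + (β : ℤ) * r2 + (γ : ℤ) * r3} := hfull ▸ Set.mem_univ _
  obtain ⟨α, β, γ, hβ, heq⟩ := hmem
  have hdvd : (Int.gcd r1 r3 : ℤ) ∣ (β : ℤ) + 1 :=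
    IsCoprime.dvd_add_one_of_neg_eq_linear_comb (Int.gcd_dvd_left r1 r3)
      (Int.gcd_dvd_right r1 r3) (Int.isCoprime_iff_gcd_eq_one.mpr hc) heq
  have hle : (Int.gcd r1 r3 : ℤ) ≤ (β : ℤ) + 1 := Int.le_of_dvd (by positivity) hdvd
  omega

theorem stmt_8 (r1 r2 r3 : ℤ) (h1 : r1 < 0) (h3 : 0 < r3)
    (hd : 1 < Int.gcd r1 r3) (hc : Int.gcd (Int.gcd r1 r3 : ℤ) r2 = 1) (v2 : ℕ)
    (hfull : {z : ℤ | ∃ α β γ : ℕ, β ≤ v2 ∧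
        z = (α : ℤ) * r1 + (β : ℤ) * r2 + (γ : ℤ) * r3} = Set.univ) :
    v2 ≥ Int.gcd r1 r3 - 1 :=
  stmt_8_general r1 r2 r3 hc v2 hfull
end

section
/- Let r₁ < 0 < r₂ be integers with gcd(r₁, r₂) = 1, and let α, β, α', β' be the (unique) nonnegative integers minimizing α + β and α' + β' subject to 1 = α r₁ + β r₂ and −1 = α' r₁ + β' r₂. If both α + β and α' + β' are even, then for every integer z there exist nonnegative integers x, y with z = x r₁ + y r₂ and x + y even. -/
lemma exists_even_repr_natCast_mul {r1 r2 v : ℤ} {a b : ℕ}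
    (hv : v = (a : ℤ) * r1 + (b : ℤ) * r2) (heven : Even (a + b)) (n : ℕ) :
    ∃ x y : ℕ, (n : ℤ) * v = (x : ℤ) * r1 + (y : ℤ) * r2 ∧ Even (x + y) :=
  ⟨n * a, n * b, by push_cast; linear_combination (n : ℤ) * hv,
    by rw [← Nat.mul_add]; exact heven.mul_left n⟩

theorem stmt_14_general (r1 r2 : ℤ)
    (α β α' β' : ℕ)
    (hαβ : (1 : ℤ) = (α : ℤ) * r1 + (β : ℤ) * r2)
    (hαβ' : (-1 : ℤ) = (α' : ℤ) * r1 + (β' : ℤ) * r2)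
    (heven : Even (α + β)) (heven' : Even (α' + β')) :
    ∀ z : ℤ, ∃ x y : ℕ, z = (x : ℤ) * r1 + (y : ℤ) * r2 ∧ Even (x + y) := by
  intro z
  obtain ⟨n, rfl | rfl⟩ := Int.eq_nat_or_neg z
  · simpa using exists_even_repr_natCast_mul hαβ heven n
  · simpa using exists_even_repr_natCast_mul hαβ' heven' n

theorem stmt_14 (r1 r2 : ℤ) (h1 : r1 < 0) (h2 : 0 < r2) (h : Int.gcd r1 r2 = 1)
    (α β α' β' : ℕ)
    (hαβ : (1 : ℤ) = (α : ℤ) * r1 + (β : ℤ) * r2)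
    (hmin : ∀ a b : ℕ, (1 : ℤ) = (a : ℤ) * r1 + (b : ℤ) * r2 → α + β ≤ a + b)
    (hαβ' : (-1 : ℤ) = (α' : ℤ) * r1 + (β' : ℤ) * r2)
    (hmin' : ∀ a b : ℕ, (-1 : ℤ) = (a : ℤ) * r1 + (b : ℤ) * r2 → α' + β' ≤ a + b)
    (heven : Even (α + β)) (heven' : Even (α' + β')) :
    ∀ z : ℤ, ∃ x y : ℕ, z = (x : ℤ) * r1 + (y : ℤ) * r2 ∧ Even (x + y) :=
  stmt_14_general r1 r2 α β α' β' hαβ hαβ' heven heven'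
end
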